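/- Fix θ₀ ∈ ℝᵈ, g ∈ ℝᵈ with g ≠ 0, constants L₀ ∈ ℝ, ε ≥ 0, c > 0, and suppose L₀ ≤ -ε. Define L̂(θ) = L₀ + ⟨g, θ - θ₀⟩. Then the convex optimization problem minimize over (θ, ξ) the quantity ‖θ - θ₀‖² + c·ξ² subject to max(-ε - L̂(θ), 0) ≤ ξ, has unique minimizer θ* = θ₀ + c·(-ε - L₀)/(1 + c‖g‖²) · g, with ξ* = (-ε - L₀)/(1 + c‖g‖²). -/

import Mathlib

/-!
Put `v = θ - θ₀`, `a = -ε - L₀ ≥ 0` and `η = a / (1 + c‖g‖²)`; the constraint says `a ≤ ⟪g, v⟫ + ξ`.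
Expanding the objective around the candidate `((c η) • g, η)` gives
`‖v‖² + c ξ² = ‖(c η) • g‖² + c η² + ‖v - (c η) • g‖² + c (ξ - η)² + 2 c η (⟪g, v⟫ + ξ - a)`,
where the last term is nonnegative by the constraint. So the candidate is a minimizer, and when
`c > 0` equality forces both squares, hence the deviation from the candidate, to vanish.
-/

open scoped RealInnerProductSpace

section PassiveAggressive

variable {E : Type*} [NormedAddCommGroup E] [InnerProductSpace ℝ E]

theorem pa_objective_eq_add (g v : E) (c η ξ : ℝ) :
    ‖v‖ ^ 2 + c * ξ ^ 2 = ‖(c * η) • g‖ ^ 2 + c * η ^ 2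
      + (‖v - (c * η) • g‖ ^ 2 + c * (ξ - η) ^ 2
        + 2 * (c * η) * (⟪g, v⟫ + ξ - η * (1 + c * ‖g‖ ^ 2))) := by
  rw [norm_sub_sq_real, norm_smul, real_inner_smul_right, real_inner_comm, Real.norm_eq_abs,
    mul_pow, sq_abs]
  ring

theorem pa_objective_le {g v : E} {c η ξ : ℝ} (hc : 0 ≤ c) (hη : 0 ≤ η)
    (hv : η * (1 + c * ‖g‖ ^ 2) ≤ ⟪g, v⟫ + ξ) :
    ‖(c * η) • g‖ ^ 2 + c * η ^ 2 ≤ ‖v‖ ^ 2 + c * ξ ^ 2 := by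
  rw [pa_objective_eq_add g v c η ξ, le_add_iff_nonneg_right]
  have := mul_nonneg hc (sq_nonneg (ξ - η))
  have := mul_nonneg (mul_nonneg hc hη) (sub_nonneg.mpr hv)
  positivity

theorem pa_minimizer_eq_of_objective_eq {g v : E} {c η ξ : ℝ} (hc : 0 < c) (hη : 0 ≤ η)
    (hv : η * (1 + c * ‖g‖ ^ 2) ≤ ⟪g, v⟫ + ξ)
    (heq : ‖v‖ ^ 2 + c * ξ ^ 2 = ‖(c * η) • g‖ ^ 2 + c * η ^ 2) :
    v = (c * η) • g ∧ ξ = η := by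
  rw [pa_objective_eq_add g v c η ξ, add_eq_left] at heq
  have hslack : 0 ≤ 2 * (c * η) * (⟪g, v⟫ + ξ - η * (1 + c * ‖g‖ ^ 2)) :=
    mul_nonneg (by positivity) (sub_nonneg.mpr hv)
  have hξ : c * (ξ - η) ^ 2 = 0 := by nlinarith [sq_nonneg (ξ - η), norm_nonneg (v - (c * η) • g)]
  have hdev : ‖v - (c * η) • g‖ ^ 2 = 0 := by nlinarith [sq_nonneg (ξ - η)]
  simp only [mul_eq_zero, hc.ne', false_or, pow_eq_zero_iff two_ne_zero, norm_eq_zero,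
    sub_eq_zero] at hξ hdev
  exact ⟨hdev, hξ⟩

end PassiveAggressive

theorem pa_update_minimizer_general (d : ℕ) (θ₀ g : EuclideanSpace ℝ (Fin d))
    (L₀ ε c : ℝ) (hc : 0 < c) (hL : L₀ ≤ -ε) :
    (max (-ε - (L₀ + ⟪g, (θ₀ + (c * (-ε - L₀) / (1 + c * ‖g‖ ^ 2)) • g) - θ₀⟫)) 0
        ≤ (-ε - L₀) / (1 + c * ‖g‖ ^ 2)) ∧
    (∀ (θ : EuclideanSpace ℝ (Fin d)) (ξ : ℝ),
      max (-ε - (L₀ + ⟪g, θ - θ₀⟫)) 0 ≤ ξ →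
      ‖(θ₀ + (c * (-ε - L₀) / (1 + c * ‖g‖ ^ 2)) • g) - θ₀‖ ^ 2
          + c * ((-ε - L₀) / (1 + c * ‖g‖ ^ 2)) ^ 2
        ≤ ‖θ - θ₀‖ ^ 2 + c * ξ ^ 2) ∧
    (∀ (θ : EuclideanSpace ℝ (Fin d)) (ξ : ℝ),
      max (-ε - (L₀ + ⟪g, θ - θ₀⟫)) 0 ≤ ξ →
      ‖θ - θ₀‖ ^ 2 + c * ξ ^ 2
        = ‖(θ₀ + (c * (-ε - L₀) / (1 + c * ‖g‖ ^ 2)) • g) - θ₀‖ ^ 2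
            + c * ((-ε - L₀) / (1 + c * ‖g‖ ^ 2)) ^ 2 →
      θ = θ₀ + (c * (-ε - L₀) / (1 + c * ‖g‖ ^ 2)) • g ∧
      ξ = (-ε - L₀) / (1 + c * ‖g‖ ^ 2)) := by
  have hD : 0 < 1 + c * ‖g‖ ^ 2 := by positivity
  set η := (-ε - L₀) / (1 + c * ‖g‖ ^ 2)
  have hη : 0 ≤ η := div_nonneg (by linarith) hD.le
  have hηD : η * (1 + c * ‖g‖ ^ 2) = -ε - L₀ := div_mul_cancel₀ _ hD.ne'
  have hconstr (θ : EuclideanSpace ℝ (Fin d)) (ξ : ℝ) (h : max (-ε - (L₀ + ⟪g, θ - θ₀⟫)) 0 ≤ ξ) :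
      η * (1 + c * ‖g‖ ^ 2) ≤ ⟪g, θ - θ₀⟫ + ξ := by
    linarith [le_max_left (-ε - (L₀ + ⟪g, θ - θ₀⟫)) 0]
  simp only [mul_div_assoc c, add_sub_cancel_left]
  refine ⟨?_, fun θ ξ h => pa_objective_le hc.le hη (hconstr θ ξ h), fun θ ξ h heq => ?_⟩
  · rw [real_inner_smul_right, real_inner_self_eq_norm_sq, max_le_iff]
    exact ⟨by linarith, hη⟩
  · obtain ⟨hθ, hξ⟩ := pa_minimizer_eq_of_objective_eq hc hη (hconstr θ ξ h) heq
    exact ⟨eq_add_of_sub_eq' hθ, hξ⟩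

theorem pa_update_minimizer (d : ℕ) (θ₀ g : EuclideanSpace ℝ (Fin d)) (hg : g ≠ 0)
    (L₀ ε c : ℝ) (hε : 0 ≤ ε) (hc : 0 < c) (hL : L₀ ≤ -ε) :
    (max (-ε - (L₀ + ⟪g, (θ₀ + (c * (-ε - L₀) / (1 + c * ‖g‖ ^ 2)) • g) - θ₀⟫)) 0
        ≤ (-ε - L₀) / (1 + c * ‖g‖ ^ 2)) ∧
    (∀ (θ : EuclideanSpace ℝ (Fin d)) (ξ : ℝ),
      max (-ε - (L₀ + ⟪g, θ - θ₀⟫)) 0 ≤ ξ →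
      ‖(θ₀ + (c * (-ε - L₀) / (1 + c * ‖g‖ ^ 2)) • g) - θ₀‖ ^ 2
          + c * ((-ε - L₀) / (1 + c * ‖g‖ ^ 2)) ^ 2
        ≤ ‖θ - θ₀‖ ^ 2 + c * ξ ^ 2) ∧
    (∀ (θ : EuclideanSpace ℝ (Fin d)) (ξ : ℝ),
      max (-ε - (L₀ + ⟪g, θ - θ₀⟫)) 0 ≤ ξ →
      ‖θ - θ₀‖ ^ 2 + c * ξ ^ 2
        = ‖(θ₀ + (c * (-ε - L₀) / (1 + c * ‖g‖ ^ 2)) • g) - θ₀‖ ^ 2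
            + c * ((-ε - L₀) / (1 + c * ‖g‖ ^ 2)) ^ 2 →
      θ = θ₀ + (c * (-ε - L₀) / (1 + c * ‖g‖ ^ 2)) • g ∧
      ξ = (-ε - L₀) / (1 + c * ‖g‖ ^ 2)) :=
  pa_update_minimizer_general d θ₀ g L₀ ε c hc hL
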